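/- The attractor of the iterated function system {S₀(x)=x/3, S₁(x)=x/6+1/3, S₂(x)=−x/6+2/3, S₃(x)=x/3+2/3} is the interval [0,1]; that is, [0,1] is the unique nonempty compact set K with K = S₀(K) ∪ S₁(K) ∪ S₂(K) ∪ S₃(K). -/

import Mathlib

noncomputable def kochIFS : Fin 4 → ℝ → ℝ :=
  ![fun x => x / 3, fun x => x / 6 + 1/3, fun x => -x / 6 + 2/3, fun x => x / 3 + 2/3]

/-! The Hutchinson operator `s ↦ ⋃ i, S i '' s` multiplies Hausdorff distances between nonempty
sets by at most `1/3`, the largest contraction ratio, so it has at most one nonempty closed bounded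
fixed point. `[0, 1]` is one, being tiled by its images `[0, 1/3]`, `[1/3, 1/2]`, `[1/2, 2/3]`,
`[2/3, 1]`. -/

open Set Metric
open scoped NNReal ENNReal

section
variable {α β : Type*}

theorem LipschitzWith.infEDist_image_le [PseudoEMetricSpace α] [PseudoEMetricSpace β] {K : ℝ≥0}
    {f : α → β} (hf : LipschitzWith K f) {t : Set α} (ht : t.Nonempty) (x : α) :
    infEDist (f x) (f '' t) ≤ K * infEDist x t := by
  rcases eq_or_ne K 0 with rfl | hK
  · obtain ⟨y, hy⟩ := ht
    exact (infEDist_le_edist_of_mem (mem_image_of_mem f hy)).trans ((hf x y).trans (by simp))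
  · have hK' : (K : ℝ≥0∞) ≠ 0 := by simpa using hK
    show _ ≤ K * ⨅ y ∈ t, edist x y
    rw [ENNReal.mul_iInf_of_ne hK' ENNReal.coe_ne_top]
    refine le_iInf fun y => ?_
    rw [ENNReal.mul_iInf_of_ne hK' ENNReal.coe_ne_top]
    exact le_iInf fun hy => (infEDist_le_edist_of_mem (mem_image_of_mem f hy)).trans (hf x y)

theorem LipschitzWith.hausdorffEDist_image_le [PseudoEMetricSpace α] [PseudoEMetricSpace β]
    {K : ℝ≥0} {f : α → β} (hf : LipschitzWith K f) {s t : Set α} (hs : s.Nonempty)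
    (ht : t.Nonempty) : hausdorffEDist (f '' s) (f '' t) ≤ K * hausdorffEDist s t := by
  refine hausdorffEDist_le_of_infEDist ?_ ?_
  · rintro _ ⟨x, hx, rfl⟩
    exact (hf.infEDist_image_le ht x).trans (by gcongr; exact infEDist_le_hausdorffEDist_of_mem hx)
  · rintro _ ⟨x, hx, rfl⟩
    rw [hausdorffEDist_comm]
    exact (hf.infEDist_image_le hs x).trans (by gcongr; exact infEDist_le_hausdorffEDist_of_mem hx)

def hutchinson {ι : Type*} (f : ι → α → α) (s : Set α) : Set α :=
  ⋃ i, f i '' s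

theorem hausdorffEDist_hutchinson_le [PseudoEMetricSpace α] {ι : Type*} {f : ι → α → α}
    {c : ℝ≥0} (hf : ∀ i, LipschitzWith c (f i)) {s t : Set α} (hs : s.Nonempty)
    (ht : t.Nonempty) : hausdorffEDist (hutchinson f s) (hutchinson f t) ≤ c * hausdorffEDist s t :=
  hausdorffEDist_iUnion_le.trans (iSup_le fun i => (hf i).hausdorffEDist_image_le hs ht)

theorem eq_of_hutchinson_eq_self [PseudoMetricSpace α] {ι : Type*} {f : ι → α → α}
    {c : ℝ≥0} (hf : ∀ i, LipschitzWith c (f i)) (hc : c < 1) {s t : Set α}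
    (hs : s.Nonempty) (hsb : Bornology.IsBounded s) (hsc : IsClosed s) (hfs : hutchinson f s = s)
    (ht : t.Nonempty) (htb : Bornology.IsBounded t) (htc : IsClosed t)
    (hft : hutchinson f t = t) : s = t := by
  set d := hausdorffEDist s t
  have hd : d ≠ ∞ := hausdorffEDist_ne_top_of_nonempty_of_bounded hs ht hsb htb
  have hcontract : d ≤ c * d := by
    simpa only [hfs, hft] using hausdorffEDist_hutchinson_le hf hs ht
  refine (hsc.hausdorffEDist_zero_iff htc).1 (by_contra fun hd0 => ?_)
  have hshrink : c * d < 1 * d := ENNReal.mul_lt_mul_left hd0 hd (ENNReal.coe_lt_one_iff.2 hc)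
  exact hshrink.not_ge (by rwa [one_mul])

end

theorem kochIFS_lipschitzWith (i : Fin 4) : LipschitzWith (1 / 3) (kochIFS i) := by
  refine LipschitzWith.of_dist_le_mul fun x y => ?_
  fin_cases i <;> simp [kochIFS, Real.dist_eq] <;>
    rw [abs_le] <;> cases abs_cases (x - y) <;> constructor <;> linarith

theorem Icc_eq_hutchinson_kochIFS : hutchinson kochIFS (Icc 0 1) = Icc (0 : ℝ) 1 := by
  refine (iUnion_subset fun i => ?_).antisymm fun t ⟨ht0, ht1⟩ => ?_
  · rintro _ ⟨x, ⟨hx0, hx1⟩, rfl⟩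
    fin_cases i <;> simp [kochIFS] <;> constructor <;> linarith
  · simp only [mem_iUnion, mem_image, mem_Icc]
    rcases le_or_gt t (1/3) with h₁ | h₁
    · exact ⟨0, 3*t, ⟨by linarith, by linarith⟩, by simp [kochIFS]⟩
    rcases le_or_gt t (1/2) with h₂ | h₂
    · exact ⟨1, 6*t - 2, ⟨by linarith, by linarith⟩, by simp [kochIFS]; ring⟩
    rcases le_or_gt t (2/3) with h₃ | h₃
    · exact ⟨2, 4 - 6*t, ⟨by linarith, by linarith⟩, by simp [kochIFS]; ring⟩
    · exact ⟨3, 3*t - 2, ⟨by linarith, by linarith⟩, by simp [kochIFS]; ring⟩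

theorem koch_ifs_attractor :
    (Set.Icc (0 : ℝ) 1 = ⋃ i : Fin 4, kochIFS i '' Set.Icc (0 : ℝ) 1) ∧
      ∀ K : Set ℝ, K.Nonempty → IsCompact K →
        K = (⋃ i : Fin 4, kochIFS i '' K) → K = Set.Icc (0 : ℝ) 1 := by
  refine ⟨Icc_eq_hutchinson_kochIFS.symm, fun K hne hK hfix => ?_⟩
  exact eq_of_hutchinson_eq_self kochIFS_lipschitzWith (by norm_num) hne hK.isBounded
    hK.isClosed hfix.symm (nonempty_Icc.2 zero_le_one) (isBounded_Icc 0 1) isClosed_Icc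
    Icc_eq_hutchinson_kochIFS
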